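/- Let m ≥ 2, φ ∈ Φ_m (convex, increasing in each variable, φ(0)=0, φ(e_j)=1 for each j), p ∈ (1,n), and Ω₁,…,Ω_m bounded convex domains containing the origin. Let K = +_φ(Ω₁,…,Ω_m) be the Orlicz sum, defined via its support function by φ(h_{Ω₁}(u)/h_K(u), …, h_{Ω_m}(u)/h_K(u)) = 1 for all u ∈ S^{n-1}. Then φ((C_p(Ω₁)/C_p(K))^{1/(n-p)}, …, (C_p(Ω_m)/C_p(K))^{1/(n-p)}) ≤ 1. -/

import Mathlib

/-!
Normalised by the Poincaré formula, `h_K dμ_p / ∫ h_K dμ_p` is a probability measure on the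
sphere, and the defining identity of the Orlicz sum says that `φ (h_{Ω_j} / h_K)` is identically
`1`.  Jensen's inequality therefore bounds `φ` at the vector of ratios
`∫ h_{Ω_j} dμ_p / ∫ h_K dμ_p = C_p(K, Ω_j) / C_p(K)` by `1`; by the capacitary Minkowski
inequality these ratios dominate `(C_p(Ω_j) / C_p(K))^{1/(n-p)}`, and `φ` is increasing.
Jensen needs a function that is convex and continuous on a closed set; `x ↦ φ (x ⊔ 0)` extends
`φ` from the orthant to a convex, hence continuous, function on all of `ℝ^m`.
-/

open MeasureTheory Set

/-- The support function `h_K(u) = sup_{x ∈ K} ⟨x, u⟩` of a set `K ⊆ ℝⁿ`. -/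
noncomputable def suppFn (n : ℕ) (K : Set (EuclideanSpace ℝ (Fin n)))
    (u : EuclideanSpace ℝ (Fin n)) : ℝ :=
  sSup ((fun x => (inner ℝ x u : ℝ)) '' K)

/-- A bounded open convex domain containing the origin. -/
def IsConvexDomain (n : ℕ) (Ω : Set (EuclideanSpace ℝ (Fin n))) : Prop :=
  IsOpen Ω ∧ Convex ℝ Ω ∧ Bornology.IsBounded Ω ∧ (0 : EuclideanSpace ℝ (Fin n)) ∈ Ω

open scoped NNReal

section SupportFunction

variable {n : ℕ} {K : Set (EuclideanSpace ℝ (Fin n))}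

lemma bddAbove_inner_image (hK : Bornology.IsBounded K) (u : EuclideanSpace ℝ (Fin n)) :
    BddAbove ((fun x => (inner ℝ x u : ℝ)) '' K) := by
  obtain ⟨R, hR⟩ := hK.exists_norm_le
  refine ⟨R * ‖u‖, ?_⟩
  rintro _ ⟨x, hx, rfl⟩
  exact (real_inner_le_norm x u).trans (mul_le_mul_of_nonneg_right (hR x hx) (norm_nonneg u))

lemma le_suppFn (hK : Bornology.IsBounded K) {x : EuclideanSpace ℝ (Fin n)} (hx : x ∈ K)
    (u : EuclideanSpace ℝ (Fin n)) : inner ℝ x u ≤ suppFn n K u :=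
  le_csSup (bddAbove_inner_image hK u) ⟨x, hx, rfl⟩

lemma suppFn_nonneg (hK : Bornology.IsBounded K) (h0 : 0 ∈ K) (u : EuclideanSpace ℝ (Fin n)) :
    0 ≤ suppFn n K u := by
  simpa using le_suppFn hK h0 u

lemma suppFn_pos (hK : Bornology.IsBounded K) (hKo : IsOpen K) (h0 : 0 ∈ K)
    {u : EuclideanSpace ℝ (Fin n)} (hu : ‖u‖ = 1) : 0 < suppFn n K u := by
  obtain ⟨ε, hε, hball⟩ := Metric.isOpen_iff.1 hKo 0 h0
  have hmem : (ε / 2) • u ∈ K := hball <| by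
    rw [Metric.mem_ball, dist_zero_right, norm_smul, hu, mul_one,
      Real.norm_of_nonneg (by linarith)]
    linarith
  have hinner : inner ℝ ((ε / 2) • u) u = ε / 2 := by
    rw [real_inner_smul_left, real_inner_self_eq_norm_sq, hu, one_pow, mul_one]
  linarith [hinner ▸ le_suppFn hK hmem u]

lemma suppFn_le_add_mul_dist {R : ℝ} (hR : ∀ x ∈ K, ‖x‖ ≤ R) (hne : K.Nonempty)
    (u v : EuclideanSpace ℝ (Fin n)) :
    suppFn n K u ≤ suppFn n K v + R * dist u v := by
  have hK : Bornology.IsBounded K := isBounded_iff_forall_norm_le.2 ⟨R, hR⟩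
  refine csSup_le (hne.image _) ?_
  rintro _ ⟨x, hx, rfl⟩
  calc inner ℝ x u = inner ℝ x v + inner ℝ x (u - v) := by rw [inner_sub_right]; ring
    _ ≤ suppFn n K v + ‖x‖ * ‖u - v‖ :=
      add_le_add (le_suppFn hK hx v) (real_inner_le_norm _ _)
    _ ≤ suppFn n K v + R * dist u v := by
      rw [dist_eq_norm]; gcongr; exact hR x hx

lemma continuous_suppFn (hK : Bornology.IsBounded K) (hne : K.Nonempty) :
    Continuous (suppFn n K) := by
  obtain ⟨R, hR⟩ := hK.exists_norm_le
  exact (LipschitzWith.of_le_add_mul' R (suppFn_le_add_mul_dist hR hne)).continuous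

lemma integrable_suppFn_sphere (hK : Bornology.IsBounded K) (hne : K.Nonempty)
    (μ : Measure (Metric.sphere (0 : EuclideanSpace ℝ (Fin n)) 1)) [IsFiniteMeasure μ] :
    Integrable (fun u : Metric.sphere (0 : EuclideanSpace ℝ (Fin n)) 1 => suppFn n K u) μ :=
  ((continuous_suppFn hK hne).comp continuous_subtype_val).integrable_of_hasCompactSupport
    (.of_compactSpace _)

end SupportFunction

lemma MonotoneOn.comp_sup_zero {E : Type*} [Zero E] [Lattice E] {φ : E → ℝ}
    (hφ : MonotoneOn φ (Ici 0)) : Monotone fun x => φ (x ⊔ 0) :=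
  fun _ _ hxy => hφ le_sup_right le_sup_right (sup_le_sup_right hxy 0)

lemma ConvexOn.comp_sup_zero {E : Type*} [AddCommGroup E] [Lattice E] [IsOrderedAddMonoid E]
    [Module ℝ E] [PosSMulMono ℝ E] {φ : E → ℝ} (hφ : ConvexOn ℝ (Ici 0) φ)
    (hmono : MonotoneOn φ (Ici 0)) :
    ConvexOn ℝ univ fun x => φ (x ⊔ 0) := by
  have hrange : (fun x : E => x ⊔ 0) '' univ = Ici 0 :=
    Subset.antisymm (by rintro _ ⟨x, -, rfl⟩; exact le_sup_right)
      fun x hx => ⟨x, mem_univ x, sup_eq_left.2 hx⟩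
  have hsup : ConvexOn ℝ univ fun x : E => x ⊔ 0 := by
    refine ⟨convex_univ, fun x _ y _ a b ha hb hab => sup_le ?_ ?_⟩
    · gcongr <;> exact le_sup_left
    · exact add_nonneg (smul_nonneg ha le_sup_right) (smul_nonneg hb le_sup_right)
  exact (hrange ▸ hφ).comp hsup (hrange ▸ hmono)

section Jensen

variable {X : Type*} [MeasurableSpace X] {μ : Measure X}

theorem ConvexOn.map_integral_smul_le {E : Type*} [NormedAddCommGroup E] [NormedSpace ℝ E]
    [CompleteSpace E] {ψ : E → ℝ} (hψ : ConvexOn ℝ univ ψ) (hψc : Continuous ψ)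
    {w : X → ℝ≥0} (hw : AEMeasurable w μ) (hw1 : ∫ x, (w x : ℝ) ∂μ = 1) {f : X → E}
    (hf : Integrable (fun x => (w x : ℝ) • f x) μ)
    (hψf : Integrable (fun x => (w x : ℝ) * ψ (f x)) μ) :
    ψ (∫ x, (w x : ℝ) • f x ∂μ) ≤ ∫ x, (w x : ℝ) * ψ (f x) ∂μ := by
  set ν := μ.withDensity fun x => w x
  have hν : IsProbabilityMeasure ν := by
    refine ⟨?_⟩
    rw [withDensity_apply _ MeasurableSet.univ, setLIntegral_univ,
      lintegral_coe_eq_integral _ (.of_integral_ne_zero (by simp [hw1])), hw1, ENNReal.ofReal_one]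
  have hint {g : X → E} (hg : Integrable (fun x => (w x : ℝ) • g x) μ) : Integrable g ν :=
    (integrable_withDensity_iff_integrable_smul₀ hw).2 (by simpa only [NNReal.smul_def] using hg)
  have hjensen := hψ.map_integral_le hψc.continuousOn isClosed_univ
    (.of_forall fun _ => mem_univ _) (hint hf) (f := f)
    ((integrable_withDensity_iff_integrable_smul₀ hw).2
      (by simpa only [NNReal.smul_def, smul_eq_mul, Function.comp_def] using hψf))
  simpa only [ν, integral_withDensity_eq_integral_smul₀ hw, NNReal.smul_def, smul_eq_mul]
    using hjensen

theorem ConvexOn.map_integral_div_integral_le_one {ι : Type*} [Fintype ι]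
    {ψ : (ι → ℝ) → ℝ} (hψ : ConvexOn ℝ univ ψ) {h : X → ℝ} {g : ι → X → ℝ}
    (hpos : ∀ x, 0 < h x) (hI : 0 < ∫ x, h x ∂μ) (hg : ∀ j, Integrable (g j) μ)
    (hψgh : ∀ x, ψ (fun j => g j x / h x) = 1) :
    ψ (fun j => (∫ x, g j x ∂μ) / ∫ x, h x ∂μ) ≤ 1 := by
  set I := ∫ x, h x ∂μ
  have hh : Integrable h μ := .of_integral_ne_zero hI.ne'
  set w : X → ℝ≥0 := fun x => (h x / I).toNNReal
  have hw (x : X) : (w x : ℝ) = h x / I := Real.coe_toNNReal _ (div_pos (hpos x) hI).le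
  have hwf : (fun x => (w x : ℝ) • fun j => g j x / h x) = fun x j => g j x / I := by
    funext x j
    rw [hw, Pi.smul_apply, smul_eq_mul]
    field_simp [(hpos x).ne']
  have hwψ : (fun x => (w x : ℝ) * ψ (fun j => g j x / h x)) = fun x => h x / I := by
    funext x
    rw [hψgh, mul_one, hw]
  have hw1 : ∫ x, (w x : ℝ) ∂μ = 1 := by
    simp only [hw, integral_div]
    exact div_self hI.ne'
  have hint : Integrable (fun x j => g j x / I) μ :=
    Integrable.of_eval fun j => (hg j).div_const I
  have key := hψ.map_integral_smul_le ((hψ.continuousOn isOpen_univ).comp_continuous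
    continuous_id mem_univ) ((hh.aemeasurable.div_const I).real_toNNReal) hw1
    (hwf ▸ hint) (hwψ ▸ hh.div_const I)
  rw [hwf, hwψ, integral_div, div_self hI.ne'] at key
  convert key using 2
  funext j
  rw [eval_integral (fun j => (hg j).div_const I), integral_div]

end Jensen

lemma div_rpow_le_div_of_rpow_one_sub_mul_rpow_le {a b s M : ℝ} (ha : 0 < a) (hb : 0 ≤ b)
    (h : a ^ (1 - s) * b ^ s ≤ M) : (b / a) ^ s ≤ M / a := by
  rw [Real.rpow_sub ha, Real.rpow_one] at h
  calc (b / a) ^ s = a / a ^ s * b ^ s / a := by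
        rw [Real.div_rpow hb ha.le]; field_simp
    _ ≤ M / a := by gcongr

theorem orlicz_brunn_minkowski_capacity_general (n m : ℕ) (p : ℝ)
    (hp : 1 < p) (hpn : p < n)
    (φ : (Fin m → ℝ) → ℝ)
    (hφconv : ConvexOn ℝ {x : Fin m → ℝ | ∀ i, 0 ≤ x i} φ)
    (hφmono : Monotone φ)
    (Ω : Fin m → Set (EuclideanSpace ℝ (Fin n))) (hΩ : ∀ j, IsConvexDomain n (Ω j))
    (K : Set (EuclideanSpace ℝ (Fin n))) (hK : IsConvexDomain n K)
    (hKdef : ∀ u : Metric.sphere (0 : EuclideanSpace ℝ (Fin n)) 1,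
      φ (fun j => suppFn n (Ω j) ↑u / suppFn n K ↑u) = 1)
    (μp : Measure (Metric.sphere (0 : EuclideanSpace ℝ (Fin n)) 1)) [IsFiniteMeasure μp]
    (CpK : ℝ) (Cp : Fin m → ℝ) (hCpK : 0 < CpK) (hCp : ∀ j, 0 < Cp j)
    (hPoincare : (p - 1) / ((n : ℝ) - p) * ∫ u, suppFn n K ↑u ∂μp = CpK)
    (hMinkowski : ∀ j, (p - 1) / ((n : ℝ) - p) * ∫ u, suppFn n (Ω j) ↑u ∂μp
      ≥ CpK ^ (((n : ℝ) - p - 1) / ((n : ℝ) - p)) * (Cp j) ^ (1 / ((n : ℝ) - p))) :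
    φ (fun j => (Cp j / CpK) ^ (1 / ((n : ℝ) - p))) ≤ 1 := by
  obtain ⟨hKo, -, hKb, hK0⟩ := hK
  have hκ : 0 < (p - 1) / ((n : ℝ) - p) := div_pos (sub_pos.2 hp) (sub_pos.2 hpn)
  have hIK : 0 < ∫ u, suppFn n K ↑u ∂μp := pos_of_mul_pos_right (hPoincare ▸ hCpK) hκ.le
  have hratio (j : Fin m) : (Cp j / CpK) ^ (1 / ((n : ℝ) - p))
      ≤ (∫ u, suppFn n (Ω j) ↑u ∂μp) / ∫ u, suppFn n K ↑u ∂μp := by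
    rw [← mul_div_mul_left (∫ u, suppFn n (Ω j) ↑u ∂μp) _ hκ.ne', hPoincare]
    refine div_rpow_le_div_of_rpow_one_sub_mul_rpow_le hCpK (hCp j).le ?_
    convert hMinkowski j using 3
    rw [one_sub_div (sub_pos.2 hpn).ne']
  have hsup_zero {x : Fin m → ℝ} (hx : 0 ≤ x) : φ (x ⊔ 0) = φ x := by
    rw [sup_eq_left.2 hx]
  have hjensen := (hφconv.comp_sup_zero (hφmono.monotoneOn _)).map_integral_div_integral_le_one
    (fun u => suppFn_pos hKb hKo hK0 (norm_eq_of_mem_sphere u)) hIK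
    (fun j => integrable_suppFn_sphere (hΩ j).2.2.1 ⟨0, (hΩ j).2.2.2⟩ μp)
    fun u => (hsup_zero fun j => div_nonneg (suppFn_nonneg (hΩ j).2.2.1 (hΩ j).2.2.2 _)
      (suppFn_nonneg hKb hK0 _)).trans (hKdef u)
  rw [← hsup_zero fun j => Real.rpow_nonneg (div_nonneg (hCp j).le hCpK.le) _]
  exact ((hφmono.monotoneOn _).comp_sup_zero hratio).trans hjensen

/-- the `p`-capacitary Orlicz–Brunn–Minkowski inequality.  If
`K = +_φ(Ω₁,…,Ω_m)` is the Orlicz sum, defined by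
`φ(h_{Ω₁}/h_K, …, h_{Ω_m}/h_K) = 1` on `S^{n-1}`, for `φ ∈ Φ_m`, then
`φ((C_p(Ω₁)/C_p(K))^{1/(n-p)}, …, (C_p(Ω_m)/C_p(K))^{1/(n-p)}) ≤ 1`.  The `p`-capacities
`CpK, Cp j` are linked to the `p`-capacitary measure `μp` of `K` by monotonicity, the
Poincaré formula, and the `p`-capacitary Minkowski inequality. -/
theorem orlicz_brunn_minkowski_capacity (n m : ℕ) (hm : 2 ≤ m) (p : ℝ)
    (hp : 1 < p) (hpn : p < n)
    (φ : (Fin m → ℝ) → ℝ)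
    (hφconv : ConvexOn ℝ {x : Fin m → ℝ | ∀ i, 0 ≤ x i} φ)
    (hφmono : Monotone φ) (hφ0 : φ 0 = 0)
    (hφe : ∀ j : Fin m, φ (Pi.single j 1) = 1)
    (Ω : Fin m → Set (EuclideanSpace ℝ (Fin n))) (hΩ : ∀ j, IsConvexDomain n (Ω j))
    (K : Set (EuclideanSpace ℝ (Fin n))) (hK : IsConvexDomain n K)
    (hsub : ∀ j, Ω j ⊆ K)
    (hKdef : ∀ u : Metric.sphere (0 : EuclideanSpace ℝ (Fin n)) 1,
      φ (fun j => suppFn n (Ω j) ↑u / suppFn n K ↑u) = 1)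
    (μp : Measure (Metric.sphere (0 : EuclideanSpace ℝ (Fin n)) 1)) [IsFiniteMeasure μp]
    (CpK : ℝ) (Cp : Fin m → ℝ) (hCpK : 0 < CpK) (hCp : ∀ j, 0 < Cp j)
    (hCple : ∀ j, Cp j ≤ CpK)
    (hPoincare : (p - 1) / ((n : ℝ) - p) * ∫ u, suppFn n K ↑u ∂μp = CpK)
    (hMinkowski : ∀ j, (p - 1) / ((n : ℝ) - p) * ∫ u, suppFn n (Ω j) ↑u ∂μp
      ≥ CpK ^ (((n : ℝ) - p - 1) / ((n : ℝ) - p)) * (Cp j) ^ (1 / ((n : ℝ) - p))) :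
    φ (fun j => (Cp j / CpK) ^ (1 / ((n : ℝ) - p))) ≤ 1 :=
  orlicz_brunn_minkowski_capacity_general n m p hp hpn φ hφconv hφmono Ω hΩ K hK hKdef μp CpK Cp
    hCpK hCp hPoincare hMinkowski
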